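/- arXiv:2105.09541 — 3 statements merged into one kernel-verified Lean document; each statement's English description precedes it below -/
import Mathlib

section
/- Let ℓ,k ∈ ℤ with ℓ ≠ 0 and ℓ dividing k(k−1), and suppose ℓ divides k−1 so that u = −(k−1)/ℓ is the identity of (ℤ, ⋆_{ℓ,k}). Then (ℤ, ⋆_{ℓ,k}) contains an invertible element u' ≠ u (i.e. an element u' ≠ u for which there is b ∈ ℤ with u' ⋆_{ℓ,k} b = u) if and only if ℓ divides k+1; in that case the only such element is u' = −(k+1)/ℓ and u' ⋆_{ℓ,k} u' = u. In particular, (ℤ, ⋆_{ℓ,k}) is never a group. -/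
/-- The operation a ⋆_{ℓ,k} b = ℓab + k(a+b) + k(k−1)/ℓ. -/
def starOp (l k a b : ℤ) : ℤ := l * a * b + k * (a + b) + k * (k - 1) / l

lemma starOp_key (l k a b : ℤ) (hl : l ≠ 0) (hdvd : l ∣ k * (k - 1)) :
    l * starOp l k a b + k = (l * a + k) * (l * b + k) := by
  obtain ⟨c, hc⟩ := hdvd
  have hdiv : k * (k - 1) / l = c := by rw [hc, Int.mul_ediv_cancel_left _ hl]
  unfold starOp
  rw [hdiv]
  nlinarith [hc]

/-- Let ℓ,k ∈ ℤ with ℓ ≠ 0, ℓ ∣ k(k−1) and ℓ ∣ k−1, and let u = −(k−1)/ℓ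
(characterized by ℓu + k = 1) be the identity of (ℤ, ⋆_{ℓ,k}). Then (ℤ, ⋆_{ℓ,k}) contains
an invertible element u' ≠ u iff ℓ ∣ k+1; in that case the only such element u' satisfies
ℓu' + k = −1 (i.e. u' = −(k+1)/ℓ) and u' ⋆ u' = u. In particular (ℤ, ⋆_{ℓ,k}) is not a group. -/
theorem starOp_invertible_iff (l k : ℤ) (hl : l ≠ 0) (hdvd : l ∣ k * (k - 1))
    (hdvd' : l ∣ (k - 1)) (u : ℤ) (hu : l * u + k = 1) :
    ((∃ u' : ℤ, u' ≠ u ∧ ∃ b : ℤ, starOp l k u' b = u) ↔ l ∣ (k + 1)) ∧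
    (∀ u' : ℤ, u' ≠ u → (∃ b : ℤ, starOp l k u' b = u) →
      l * u' + k = -1 ∧ starOp l k u' u' = u) ∧
    ¬ (∀ a : ℤ, ∃ b : ℤ, starOp l k a b = u) := by
  -- star a b = u ↔ (la+k)(lb+k) = 1
  have hiff : ∀ a b : ℤ, starOp l k a b = u ↔ (l * a + k) * (l * b + k) = 1 := by
    intro a b
    rw [← starOp_key l k a b hl hdvd]
    constructor
    · intro h; rw [h, hu]
    · intro h
      have : l * starOp l k a b = l * u := by omega
      exact mul_left_cancel₀ hl this
  have hne : ∀ a : ℤ, a ≠ u ↔ l * a + k ≠ 1 := by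
    intro a
    constructor
    · intro h h1
      apply h
      have : l * a = l * u := by omega
      exact mul_left_cancel₀ hl this
    · intro h h1; exact h (h1 ▸ hu)
  refine ⟨⟨?_, ?_⟩, ?_, ?_⟩
  · rintro ⟨u', hne', b, hb⟩
    rw [hiff] at hb
    rcases Int.mul_eq_one_iff_eq_one_or_neg_one.mp hb with ⟨h1, _⟩ | ⟨h1, _⟩
    · exact absurd h1 ((hne u').mp hne')
    · exact ⟨-u', by linarith⟩
  · intro hk1
    obtain ⟨c, hc⟩ := hk1
    obtain ⟨d, hd⟩ := hdvd'
    refine ⟨u - c + d, ?_, u - c + d, ?_⟩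
    · rw [hne]
      have : l * (u - c + d) + k = -1 := by nlinarith
      omega
    · rw [hiff]
      have : l * (u - c + d) + k = -1 := by nlinarith
      rw [this]; ring
  · intro u' hne' ⟨b, hb⟩
    rw [hiff] at hb
    rcases Int.mul_eq_one_iff_eq_one_or_neg_one.mp hb with ⟨h1, _⟩ | ⟨h1, _⟩
    · exact absurd h1 ((hne u').mp hne')
    · refine ⟨h1, ?_⟩
      rw [hiff, h1]; ring
  · intro h
    obtain ⟨b, hb⟩ := h (u + l)
    rw [hiff] at hb
    have h2 : l * (u + l) + k = 1 + l * l := by linarith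
    rw [h2] at hb
    rcases Int.mul_eq_one_iff_eq_one_or_neg_one.mp hb with ⟨h1, _⟩ | ⟨h1, _⟩
    · exact hl (mul_self_eq_zero.mp (by omega))
    · nlinarith [mul_self_nonneg l]
end

section
/- Let ℓ,k ∈ ℤ with ℓ > 0 and ℓ dividing k(k−1). Then for every finite coloring ℕ = C_1 ∪ … ∪ C_r of the positive integers there exist an injective sequence (x_n)_{n=1}^∞ of positive integers and a color C_i such that 𝔖_{ℓ,k}(x_n)_{n=1}^∞ ⊆ C_i. -/
/-- The value of the (ℓ,k)-symmetric polynomial 𝔖_{ℓ,k} on the family (x i)_{i ∈ F}. -/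
def symVal (l k : ℤ) (x : ℕ → ℤ) (F : Finset ℕ) : ℤ :=
  (∑ G ∈ F.powerset.filter (fun G => G ≠ ∅),
      l ^ (G.card - 1) * k ^ (F.card - G.card) * ∏ i ∈ G, x i)
    + (k ^ F.card - k) / l

/-- The (ℓ,k)-symmetric system of a sequence. -/
def symSystem (l k : ℤ) (x : ℕ → ℤ) : Set ℤ :=
  {z : ℤ | ∃ F : Finset ℕ, F.Nonempty ∧ symVal l k x F = z}

/-!
Under `z ↦ ℓ z + k` the polynomial `𝔖_{ℓ,k}` becomes a product: `ℓ 𝔖(a) + k = ∏ (ℓ a_j + k)`.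
Fix `m > max k 1` with `m ≡ k (mod ℓ)`. As `ℓ ∣ k (k - 1)`, `ℓ` divides `m ^ n - k` for every
`n ≥ 1`, so `y n = (m ^ n - k) / ℓ` is a positive integer, and for `x_j = y (B_j)` the product is
`m ^ (∑ B_j)`, i.e. `𝔖(x_F) = y (∑_{j ∈ F} B_j)`. It remains to colour `n` by the colour of `y n`
and to find, by Hindman's theorem, a strictly increasing `B` all of whose finite sums have one
colour; monotonicity comes from grouping a Hindman sequence into blocks, each longer than the
total of everything before it.
-/

open Finset

section Expansion

variable {R : Type*} [CommRing R]

theorem prod_mul_add_eq_pow_add_mul_sum (l k : R) (x : ℕ → R) (F : Finset ℕ) :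
    ∏ i ∈ F, (l * x i + k) = k ^ #F + l * ∑ G ∈ F.powerset.filter (fun G => G ≠ ∅),
      l ^ (#G - 1) * k ^ (#F - #G) * ∏ i ∈ G, x i := by
  rw [prod_add, ← add_sum_erase _ _ (empty_mem_powerset F), filter_ne', mul_sum]
  congr 1
  · simp
  refine sum_congr rfl fun G hG => ?_
  have hGF : G ⊆ F := mem_powerset.mp (mem_of_mem_erase hG)
  obtain ⟨c, hc⟩ : ∃ c, #G = c + 1 :=
    Nat.exists_eq_add_one.mpr (card_pos.mpr (nonempty_iff_ne_empty.mpr (ne_of_mem_erase hG)))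
  rw [prod_mul_distrib, prod_const, prod_const, card_sdiff_of_subset hGF, hc, pow_succ,
    Nat.add_sub_cancel]
  ring

theorem dvd_pow_sub_self {l k : R} (hdvd : l ∣ k * (k - 1)) {c : ℕ} (hc : 1 ≤ c) :
    l ∣ k ^ c - k := by
  obtain ⟨d, rfl⟩ := Nat.exists_eq_add_of_le hc
  have hd : k - 1 ∣ k ^ d - 1 := by simpa using sub_dvd_pow_sub_pow k 1 d
  exact hdvd.trans (by simpa [add_comm 1 d, pow_succ', mul_sub] using mul_dvd_mul_left k hd)

theorem dvd_pow_sub_of_dvd_sub {l k m : R} (hdvd : l ∣ k * (k - 1)) (hm : l ∣ m - k) {c : ℕ}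
    (hc : 1 ≤ c) : l ∣ m ^ c - k := by
  simpa using dvd_add (hm.trans (sub_dvd_pow_sub_pow m k c)) (dvd_pow_sub_self hdvd hc)

end Expansion

theorem mul_symVal_add {l k : ℤ} (hdvd : l ∣ k * (k - 1)) (x : ℕ → ℤ) {F : Finset ℕ}
    (hF : F.Nonempty) : l * symVal l k x F + k = ∏ i ∈ F, (l * x i + k) := by
  rw [symVal, mul_add, Int.mul_ediv_cancel' (dvd_pow_sub_self hdvd (card_pos.mpr hF)),
    prod_mul_add_eq_pow_add_mul_sum]
  ring

/-- The preimage of `m ^ n` under `z ↦ l * z + k`, when `l ∣ m ^ n - k`. -/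
def powVal (l k m : ℤ) (n : ℕ) : ℤ := (m ^ n - k) / l

section PowVal

variable {l k m : ℤ}

theorem mul_powVal_add (hdvd : l ∣ k * (k - 1)) (hm : l ∣ m - k) {n : ℕ} (hn : 1 ≤ n) :
    l * powVal l k m n + k = m ^ n := by
  rw [powVal, Int.mul_ediv_cancel' (dvd_pow_sub_of_dvd_sub hdvd hm hn), sub_add_cancel]

theorem powVal_pos (hl : 0 < l) (hdvd : l ∣ k * (k - 1)) (hm : l ∣ m - k) (hkm : k < m)
    (h1m : 1 ≤ m) {n : ℕ} (hn : 1 ≤ n) : 0 < powVal l k m n := by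
  have : m ≤ m ^ n := le_self_pow₀ h1m (by omega)
  exact Int.ediv_pos_of_pos_of_dvd (by omega) hl.le (dvd_pow_sub_of_dvd_sub hdvd hm hn)

theorem powVal_injOn (hdvd : l ∣ k * (k - 1)) (hm : l ∣ m - k) (h1m : 1 < m) :
    Set.InjOn (powVal l k m) {n | 1 ≤ n} := fun p hp q hq hpq =>
  pow_right_injective₀ (by omega) h1m.ne' <| by
    simp only [← mul_powVal_add hdvd hm hp, ← mul_powVal_add hdvd hm hq, hpq]

theorem symVal_powVal (hl : l ≠ 0) (hdvd : l ∣ k * (k - 1)) (hm : l ∣ m - k) {B : ℕ → ℕ}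
    {F : Finset ℕ} (hF : F.Nonempty) (hB : ∀ i ∈ F, 1 ≤ B i) :
    symVal l k (fun i => powVal l k m (B i)) F = powVal l k m (∑ i ∈ F, B i) := by
  obtain ⟨j, hj⟩ := hF
  have hsum : 1 ≤ ∑ i ∈ F, B i := (hB j hj).trans (single_le_sum (fun _ _ => Nat.zero_le _) hj)
  apply mul_left_cancel₀ hl
  apply add_right_cancel (b := k)
  rw [mul_symVal_add hdvd _ ⟨j, hj⟩, mul_powVal_add hdvd hm hsum, ← prod_pow_eq_pow_sum]
  exact prod_congr rfl fun i hi => mul_powVal_add hdvd hm (hB i hi)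

end PowVal

namespace Hindman

theorem pos_of_mem_FS {M : Type*} [AddMonoid M] [Preorder M] [AddLeftStrictMono M]
    {a : Stream' M} (ha : ∀ i, 0 < a.get i) {m : M} (hm : m ∈ FS a) : 0 < m := by
  induction hm with
  | head' a => exact ha 0
  | tail' a m _ ih => exact ih fun i => ha (i + 1)
  | cons' a m _ ih => exact add_pos (ha 0) (ih fun i => ha (i + 1))

theorem FS.sum_sum_Ico_mem {M : Type*} [AddCommMonoid M] (b : Stream' M) {T : ℕ → ℕ}
    (hT : StrictMono T) {F : Finset ℕ} (hF : F.Nonempty) :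
    ∑ n ∈ F, ∑ i ∈ Ico (T n) (T (n + 1)), b.get i ∈ FS b := by
  have hdisj : (F : Set ℕ).PairwiseDisjoint fun n => Ico (T n) (T (n + 1)) := fun u _ v _ huv => by
    simpa [← disjoint_coe, coe_Ico] using hT.monotone.pairwise_disjoint_on_Ico_succ huv
  rw [← sum_biUnion hdisj]
  obtain ⟨n, hn⟩ := hF
  exact FS.finsetSum b _ ⟨T n, mem_biUnion.mpr ⟨n, hn, left_mem_Ico.mpr (hT n.lt_succ_self)⟩⟩

/-- Each block `[blockEnds b n, blockEnds b (n + 1))` is longer than the total mass of `b` before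
it, so for `b ≥ 1` the block sums strictly increase. -/
def blockEnds (b : ℕ → ℕ) : ℕ → ℕ
  | 0 => 0
  | n + 1 => blockEnds b n + 1 + ∑ i ∈ range (blockEnds b n), b i

theorem blockEnds_strictMono (b : ℕ → ℕ) : StrictMono (blockEnds b) :=
  strictMono_nat_of_lt_succ fun n => by simp only [blockEnds]; omega

theorem strictMono_sum_Ico_blockEnds {b : ℕ → ℕ} (hb : ∀ i, 0 < b i) :
    StrictMono fun n => ∑ i ∈ Ico (blockEnds b n) (blockEnds b (n + 1)), b i := by
  refine strictMono_nat_of_lt_succ fun n => ?_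
  set T := blockEnds b
  calc ∑ i ∈ Ico (T n) (T (n + 1)), b i
      ≤ ∑ i ∈ range (T (n + 1)), b i :=
        sum_le_sum_of_subset fun i => by simp only [mem_Ico, mem_range]; omega
    _ < T (n + 2) - T (n + 1) := by simp only [T, blockEnds]; omega
    _ = #(Ico (T (n + 1)) (T (n + 2))) • 1 := by simp
    _ ≤ ∑ i ∈ Ico (T (n + 1)) (T (n + 2)), b i := card_nsmul_le_sum _ b 1 fun i _ => hb i

theorem exists_strictMono_sum_mem_FS (b : Stream' ℕ) (hb : ∀ i, 0 < b.get i) :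
    ∃ B : ℕ → ℕ, StrictMono B ∧ ∀ F : Finset ℕ, F.Nonempty → ∑ n ∈ F, B n ∈ FS b :=
  ⟨_, strictMono_sum_Ico_blockEnds hb, fun _ hF => FS.sum_sum_Ico_mem b (blockEnds_strictMono _) hF⟩

theorem exists_strictMono_sum_mem_of_cover {ι : Type*} [Finite ι] (C : ι → Set ℕ)
    (hC : ∀ n, 0 < n → ∃ i, n ∈ C i) :
    ∃ i, ∃ B : ℕ → ℕ, StrictMono B ∧ ∀ F : Finset ℕ, F.Nonempty → ∑ n ∈ F, B n ∈ C i := by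
  have hcover : FS (fun n => n + 1 : Stream' ℕ) ⊆ ⋃₀ Set.range fun i => C i ∩ Set.Ioi 0 := by
    intro n hn
    have hpos := pos_of_mem_FS (fun i => i.succ_pos) hn
    obtain ⟨i, hi⟩ := hC n hpos
    exact ⟨_, ⟨i, rfl⟩, hi, hpos⟩
  obtain ⟨_, ⟨i, rfl⟩, b, hb⟩ := FS_partition_regular _ _ (Set.finite_range _) hcover
  obtain ⟨B, hB, hBb⟩ := exists_strictMono_sum_mem_FS b fun j => (hb (FS.singleton b j)).2
  exact ⟨i, B, hB, fun F hF => (hb (hBb F hF)).1⟩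

end Hindman

/-- Let ℓ,k ∈ ℤ with ℓ > 0 and ℓ ∣ k(k−1). For every finite coloring of the
positive integers there exist an injective sequence of positive integers (xₙ) and a color
C i with 𝔖_{ℓ,k}(xₙ) ⊆ C i. -/
theorem symSystem_partition_regular_nat (l k : ℤ) (hl : 0 < l) (hdvd : l ∣ k * (k - 1))
    (r : ℕ) (C : Fin r → Set ℤ) (hC : (⋃ i, C i) = {z : ℤ | 0 < z}) :
    ∃ x : ℕ → ℤ, Function.Injective x ∧ (∀ n : ℕ, 0 < x n) ∧
      ∃ i : Fin r, symSystem l k x ⊆ C i := by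
  set m := k + l * (|k| + 2)
  have hm : l ∣ m - k := ⟨|k| + 2, by ring⟩
  have hm2 : 2 ≤ m := by nlinarith [neg_abs_le k, abs_nonneg k]
  have hkm : k < m := by nlinarith [abs_nonneg k]
  have hpos : ∀ n, 1 ≤ n → 0 < powVal l k m n := fun n => powVal_pos hl hdvd hm hkm (by omega)
  obtain ⟨i, B, hBmono, hB⟩ := Hindman.exists_strictMono_sum_mem_of_cover
    (fun i => {n | 0 < n ∧ powVal l k m n ∈ C i}) fun n hn => by
      simpa [hn] using (hC ▸ hpos n hn : powVal l k m n ∈ ⋃ i, C i)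
  have hB1 : ∀ n, 1 ≤ B n := fun n => by simpa using (hB {n} (singleton_nonempty n)).1.nat_succ_le
  refine ⟨fun n => powVal l k m (B n), fun p q hpq => hBmono.injective
    (powVal_injOn hdvd hm (by omega) (hB1 p) (hB1 q) hpq), fun n => hpos _ (hB1 n), i, ?_⟩
  rintro _ ⟨F, hF, rfl⟩
  rw [symVal_powVal hl.ne' hdvd hm hF fun n _ => hB1 n]
  exact (hB F hF).2
end

section
/- Let ℓ,k ∈ ℤ with ℓ > 0 and ℓ dividing k−1. Then for every finite coloring ℕ = C_1 ∪ … ∪ C_r of the positive integers and every L ∈ ℕ there exist a color C_i and positive integers a, b such that the elements a, b, and (1/ℓ)·((ℓa+k)(ℓb+k)^j − k) for j = 1,…,L all belong to C_i, and these L+2 elements are pairwise distinct. -/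
/-!
The affine map `φ x = l * x + k` turns `⋆_{l,k}` into multiplication, and since `k ≡ 1 (mod l)`
every power of `m := l * (|k| + 1) + 1` lies in `φ ℤ`. Colour an exponent `t` by the colour of
`φ⁻¹ (m ^ t)`. Brauer's theorem (for every finite colouring of `ℕ` some `d, s, s + d, …, s + n d`
are monochromatic; it follows from van der Waerden's theorem by induction on the number of colours)
gives exponents `d, s + d, s + 2d, …, s + (L + 1) d` of one colour, and then
`a = φ⁻¹ (m ^ (s + d))`, `b = φ⁻¹ (m ^ d)` work, because `a ⋆ b ⋆ ⋯ ⋆ b = φ⁻¹ (m ^ (s + d + j d))`.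
The elements are distinct since `t ↦ φ⁻¹ (m ^ t)` is strictly increasing and the exponents are.
-/

open Finset

theorem Combinatorics.Line.exists_sum_apply_eq_nsmul_add {α ι M : Type*} [Fintype ι]
    [AddCommMonoid M] (l : Line α ι) (φ : α → M) :
    ∃ b : M, ∀ x, ∑ i, φ (l x i) = #{i | l.idxFun i = none} • φ x + b := by
  classical
  refine ⟨∑ i, ((l.idxFun i).map φ).getD 0, fun x => ?_⟩
  have hcoord : ∀ i, φ (l x i) =
      (if l.idxFun i = none then φ x else 0) + ((l.idxFun i).map φ).getD 0 := by
    intro i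
    cases h : l.idxFun i <;> simp [h]
  rw [Finset.sum_congr rfl fun i _ => hcoord i, Finset.sum_add_distrib, ← Finset.sum_filter,
    Finset.sum_const]

/-- Summing coordinates maps a monochromatic combinatorial line of `Fin (M + 1) ^ ι` onto a
monochromatic progression whose difference is the number of moving coordinates. -/
theorem exists_bound_mono_arithProg (κ : Type*) [Finite κ] (M : ℕ) :
    ∃ N, ∀ χ : ℕ → κ, ∃ a d, 0 < a ∧ 0 < d ∧ a + M * d ≤ N ∧ ∀ i ≤ M, χ (a + i * d) = χ a := by
  obtain ⟨ι, _, hι⟩ := Combinatorics.Line.exists_mono_in_high_dimension (Fin (M + 1)) κ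
  refine ⟨1 + Fintype.card ι * M, fun χ => ?_⟩
  obtain ⟨l, c, hl⟩ := hι fun v => χ (1 + ∑ i, (v i : ℕ))
  obtain ⟨b, hb⟩ := l.exists_sum_apply_eq_nsmul_add (fun x => (x : ℕ))
  set d := #{i | l.idxFun i = none}
  have hd : 0 < d := Finset.card_pos.mpr ⟨l.proper.choose, by simpa using l.proper.choose_spec⟩
  have hterm : ∀ i ≤ M, χ (1 + b + i * d) = c := by
    intro i hi
    have := hl (Fin.mk i (by omega))
    dsimp only at this
    rwa [hb, smul_eq_mul, Fin.val_mk, mul_comm, ← add_assoc, add_right_comm] at this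
  have hbound : ∑ i, (l (Fin.last M) i : ℕ) ≤ Fintype.card ι * M := by
    have := Finset.sum_le_card_nsmul univ _ M fun i _ => Fin.is_le (l (Fin.last M) i)
    rwa [smul_eq_mul, Finset.card_univ] at this
  rw [hb, smul_eq_mul, Fin.val_last] at hbound
  refine ⟨1 + b, d, by omega, hd, by linarith, fun i hi => ?_⟩
  rw [hterm i hi, ← hterm 0 (Nat.zero_le _), zero_mul, add_zero]

theorem Fin.exists_eqOn_succAbove_comp {α : Type*} {r : ℕ} {f : α → Fin (r + 1)}
    {c : Fin (r + 1)} {S : Set α} (hS : S.Nonempty) (hf : ∀ t ∈ S, f t ≠ c) :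
    ∃ g : α → Fin r, Set.EqOn f (c.succAbove ∘ g) S := by
  classical
  obtain ⟨t₀, ht₀⟩ := hS
  obtain ⟨z₀, -⟩ := Fin.exists_succAbove_eq (hf t₀ ht₀)
  refine ⟨fun t => if h : f t = c then z₀ else (Fin.exists_succAbove_eq h).choose,
    fun t ht => ?_⟩
  simp [dif_neg (hf t ht), (Fin.exists_succAbove_eq (hf t ht)).choose_spec]

theorem exists_bound_brauer_config (L : ℕ) : ∀ r : ℕ, ∃ N, ∀ χ : ℕ → Fin r, ∃ a d,
    0 < a ∧ 0 < d ∧ a + L * d ≤ N ∧ d ≤ N ∧ χ d = χ a ∧ ∀ j ≤ L, χ (a + j * d) = χ a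
  | 0 => ⟨0, fun χ => (χ 0).elim0⟩
  | r + 1 => by
    obtain ⟨N₁, h₁⟩ := exists_bound_brauer_config L r
    obtain ⟨N₂, h₂⟩ := exists_bound_mono_arithProg (Fin (r + 1)) (L * (N₁ + 1) + 1)
    refine ⟨(N₁ + 1) * N₂, fun χ => ?_⟩
    obtain ⟨a, d, ha, hd, hN₂, hAP⟩ := h₂ χ
    have hdN₂ : d ≤ N₂ := by nlinarith [Nat.zero_le (L * (N₁ + 1) * d)]
    -- Either a multiple `t * d` takes the colour of the progression, or `t ↦ χ (t * d)` avoids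
    -- that colour on `[1, N₁ + 1]` and the induction hypothesis applies to it.
    by_cases h : ∃ t ∈ Set.Icc 1 (N₁ + 1), χ (t * d) = χ a
    · obtain ⟨t, ⟨ht1, htN₁⟩, htc⟩ := h
      refine ⟨a, t * d, ha, by positivity, ?_, by nlinarith, htc, fun j hj => ?_⟩
      · nlinarith [Nat.mul_le_mul_left L htN₁]
      · rw [← mul_assoc]
        exact hAP (j * t) (by nlinarith)
    · push Not at h
      obtain ⟨g, hg⟩ := Fin.exists_eqOn_succAbove_comp (f := fun t => χ (t * d))
        ⟨1, by simp⟩ fun t ht => h t ht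
      have hgχ : ∀ t ∈ Set.Icc 1 (N₁ + 1), ∀ t' ∈ Set.Icc 1 (N₁ + 1),
          g t = g t' → χ (t * d) = χ (t' * d) := fun t ht t' ht' htt' =>
        (hg ht).trans ((congrArg _ htt').trans (hg ht').symm)
      obtain ⟨a', d', ha', hd', ha'N₁, hd'N₁, hcol, hAP'⟩ := h₁ g
      have hAPχ : ∀ j ≤ L, χ ((a' + j * d') * d) = χ (a' * d) := fun j hj =>
        hgχ _ ⟨by omega, by nlinarith⟩ _ ⟨ha', by nlinarith⟩ (hAP' j hj)
      refine ⟨a' * d, d' * d, by positivity, by positivity, by nlinarith, by nlinarith,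
        hgχ _ ⟨hd', by omega⟩ _ ⟨ha', by nlinarith⟩ hcol, fun j hj => ?_⟩
      rw [← hAPχ j hj]
      ring_nf

theorem exists_brauer_config {κ : Type*} [Finite κ] (χ : ℕ → κ) (L : ℕ) :
    ∃ a d, 0 < a ∧ 0 < d ∧ χ d = χ a ∧ ∀ j ≤ L, χ (a + j * d) = χ a := by
  obtain ⟨r, ⟨e⟩⟩ := Finite.exists_equiv_fin κ
  obtain ⟨N, hN⟩ := exists_bound_brauer_config L r
  obtain ⟨a, d, ha, hd, -, -, hcol, hAP⟩ := hN (e ∘ χ)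
  exact ⟨a, d, ha, hd, e.injective hcol, fun j hj => e.injective (hAP j hj)⟩

theorem exists_forall_mem_of_subset_iUnion {α ι : Type*} [Nonempty ι] {C : ι → Set α}
    {S : Set α} (hS : S ⊆ ⋃ i, C i) : ∃ χ : α → ι, ∀ z ∈ S, z ∈ C (χ z) :=
  ⟨fun z => Classical.epsilon (z ∈ C ·),
    fun _ hz => Classical.epsilon_spec (Set.mem_iUnion.mp (hS hz))⟩

theorem dvd_pow_sub_of_dvd_sub_one {R : Type*} [CommRing R] {l k m : R} (hk : l ∣ k - 1)
    (hm : l ∣ m - 1) (t : ℕ) : l ∣ m ^ t - k := by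
  simpa only [sub_sub_sub_cancel_right] using (hm.trans (sub_one_dvd_pow_sub_one m t)).sub hk

/-- `φ⁻¹ (m ^ t)` for `φ x = l * x + k`, i.e. the `t`-th `⋆_{l,k}`-power of `(m - k) / l`. -/
def starPow (l k m : ℤ) (t : ℕ) : ℤ := (m ^ t - k) / l

section StarPow

variable {l k m : ℤ}

theorem mul_starPow_add (hk : l ∣ k - 1) (hm : l ∣ m - 1) (t : ℕ) :
    l * starPow l k m t + k = m ^ t := by
  rw [starPow, Int.mul_ediv_cancel' (dvd_pow_sub_of_dvd_sub_one hk hm t), sub_add_cancel]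

theorem starPow_add_mul (hk : l ∣ k - 1) (hm : l ∣ m - 1) (s d j : ℕ) :
    ((l * starPow l k m s + k) * (l * starPow l k m d + k) ^ j - k) / l =
      starPow l k m (s + j * d) := by
  rw [mul_starPow_add hk hm, mul_starPow_add hk hm, ← pow_mul, ← pow_add, mul_comm d j, starPow]

theorem starPow_strictMono (hl : 0 < l) (hk : l ∣ k - 1) (hm : l ∣ m - 1) (h1m : 1 < m) :
    StrictMono (starPow l k m) := fun s t hst => by
  have hpow := pow_lt_pow_right₀ h1m hst
  rw [← mul_starPow_add hk hm, ← mul_starPow_add hk hm, add_lt_add_iff_right] at hpow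
  exact lt_of_mul_lt_mul_left hpow hl.le

theorem starPow_pos (hl : 0 < l) (hk : l ∣ k - 1) (hm : l ∣ m - 1) (h1m : 1 ≤ m) (hkm : k < m)
    {t : ℕ} (ht : t ≠ 0) : 0 < starPow l k m t := by
  have hmt : m ≤ m ^ t := le_self_pow₀ h1m ht
  have := mul_starPow_add hk hm t
  exact pos_of_mul_pos_right (by linarith) hl.le

end StarPow

theorem injective_ite_zero_one {s d : ℕ} (hd : 0 < d) (hds : d < s) :
    Function.Injective fun j : ℕ => if j = 0 then s else if j = 1 then d else s + (j - 1) * d := by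
  have hgt : ∀ n, 2 ≤ n → s < s + (n - 1) * d := fun n hn => by
    have : 0 < (n - 1) * d := Nat.mul_pos (by omega) hd
    omega
  intro i j h
  dsimp only at h
  split_ifs at h
  all_goals first
    | omega
    | have := hgt i (by omega); omega
    | have := hgt j (by omega); omega
    | have := Nat.eq_of_mul_eq_mul_right hd (Nat.add_left_cancel h); omega

theorem injective_starPow_config {l k m : ℤ} (hl : 0 < l) (hk : l ∣ k - 1) (hm : l ∣ m - 1)
    (h1m : 1 < m) {L s d : ℕ} (hd : 0 < d) (hds : d < s) :
    Function.Injective fun j : Fin (L + 2) =>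
      if (j : ℕ) = 0 then starPow l k m s
      else if (j : ℕ) = 1 then starPow l k m d
      else ((l * starPow l k m s + k) * (l * starPow l k m d + k) ^ ((j : ℕ) - 1) - k) / l := by
  convert (starPow_strictMono hl hk hm h1m).injective.comp
    ((injective_ite_zero_one hd hds).comp Fin.val_injective) using 1
  funext j
  simp only [Function.comp_apply]
  split_ifs <;> simp [starPow_add_mul hk hm]

theorem brauer_type_nat_general (l k : ℤ) (hl : 0 < l) (hdvd : l ∣ (k - 1)) (r : ℕ)
    (C : Fin r → Set ℤ) (hC : (⋃ i, C i) = {z : ℤ | 0 < z}) (L : ℕ) :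
    ∃ (i : Fin r) (a b : ℤ), 0 < a ∧ 0 < b ∧
      a ∈ C i ∧ b ∈ C i ∧
      (∀ j : ℕ, 1 ≤ j → j ≤ L → ((l * a + k) * (l * b + k) ^ j - k) / l ∈ C i) ∧
      Function.Injective (fun j : Fin (L + 2) =>
        if (j : ℕ) = 0 then a
        else if (j : ℕ) = 1 then b
        else ((l * a + k) * (l * b + k) ^ ((j : ℕ) - 1) - k) / l) := by
  have : Nonempty (Fin r) :=
    (Set.mem_iUnion.mp (hC.ge (show (1 : ℤ) ∈ {z : ℤ | 0 < z} by simp))).nonempty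
  obtain ⟨col, hcol⟩ := exists_forall_mem_of_subset_iUnion hC.ge
  set m := l * (|k| + 1) + 1
  have hm : l ∣ m - 1 := ⟨|k| + 1, by ring⟩
  have h1m : 1 < m := by nlinarith [abs_nonneg k]
  have hkm : k < m := by nlinarith [le_abs_self k]
  set f := starPow l k m
  have hfpos : ∀ {t}, t ≠ 0 → 0 < f t := starPow_pos hl hdvd hm h1m.le hkm
  obtain ⟨s, d, hs, hd, hcol_d, hAP⟩ := exists_brauer_config (col ∘ f) (L + 1)
  have hmem : ∀ t ≠ 0, col (f t) = col (f s) → f t ∈ C (col (f s)) :=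
    fun t ht h => h ▸ hcol _ (hfpos ht)
  refine ⟨col (f s), f (s + d), f d, hfpos (by omega), hfpos hd.ne',
    hmem _ (by omega) (by simpa using hAP 1 (by omega)), hmem _ hd.ne' hcol_d,
    fun j hj hjL => ?_, injective_starPow_config hl hdvd hm h1m hd (by omega)⟩
  rw [starPow_add_mul hdvd hm, show s + d + j * d = s + (j + 1) * d by ring]
  exact hmem _ (by omega) (hAP _ (by omega))

/-- Brauer-type theorem for ⋆_{ℓ,k} on the positive integers. Let ℓ,k ∈ ℤ
with ℓ > 0 and ℓ ∣ k−1. For every finite coloring of the positive integers and every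
L ≥ 1 there are a color C i and positive integers a, b such that a, b, and
(1/ℓ)·((ℓa+k)(ℓb+k)^j − k) for j = 1,…,L all lie in C i, and these L+2 elements are
pairwise distinct. -/
theorem brauer_type_nat (l k : ℤ) (hl : 0 < l) (hdvd : l ∣ (k - 1)) (r : ℕ)
    (C : Fin r → Set ℤ) (hC : (⋃ i, C i) = {z : ℤ | 0 < z}) (L : ℕ) (hL : 0 < L) :
    ∃ (i : Fin r) (a b : ℤ), 0 < a ∧ 0 < b ∧
      a ∈ C i ∧ b ∈ C i ∧
      (∀ j : ℕ, 1 ≤ j → j ≤ L → ((l * a + k) * (l * b + k) ^ j - k) / l ∈ C i) ∧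
      Function.Injective (fun j : Fin (L + 2) =>
        if (j : ℕ) = 0 then a
        else if (j : ℕ) = 1 then b
        else ((l * a + k) * (l * b + k) ^ ((j : ℕ) - 1) - k) / l) :=
  brauer_type_nat_general l k hl hdvd r C hC L
end
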